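/- arXiv:1707.01010 — 2 statements merged into one kernel-verified Lean document; each statement's English description precedes it below -/
import Mathlib

section
/- Over a binary alphabet {a, b}, for every p ≥ 1, the word a^{p+1} b^{p+1} a^{p+1} b^p is primitive but not ins-robust. -/
/-- `wpow v n` is the word `v` repeated `n` times. -/
def wpow {V : Type*} (v : List V) : ℕ → List V
  | 0 => []
  | n + 1 => v ++ wpow v n

/-- A word is primitive if it is nonempty and not a proper power. -/
def Primitive {V : Type*} (w : List V) : Prop :=
  w ≠ [] ∧ ∀ (v : List V) (n : ℕ), w = wpow v n → n = 1

/-- A word is ins-robust if it is primitive and inserting any letter at any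
position yields a primitive word. -/
def InsRobust {V : Type*} (w : List V) : Prop :=
  Primitive w ∧ ∀ (x y : List V) (a : V), w = x ++ y → Primitive (x ++ a :: y)

/-- `HasPeriod w p` : the word `w` is periodic with period `p`. -/
def HasPeriod {V : Type*} (w : List V) (p : ℕ) : Prop :=
  ∀ i, i + p < w.length → w[i]? = w[i + p]?

/-!
A proper power `v ^ n` with `n ≥ 2` has the period `|v| ≤ |w| / 2`. The prefix
`a^{p+1} b^{p+1}` rules out every period `q ≤ 2p + 1`: some position `i ≤ p` carrying `a` is
sent by `q` into the `b`-block. Hence the word, of length `4p + 3`, is primitive, while inserting a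
final `b` turns it into the square `(a^{p+1} b^{p+1})^2`.
-/

section Words

variable {V : Type*}

@[simp]
lemma wpow_singleton (x : V) (n : ℕ) : wpow [x] n = List.replicate n x := by
  induction n with
  | zero => rfl
  | succ n ih => rw [wpow, ih, List.replicate_succ, List.singleton_append]

@[simp]
lemma length_wpow (v : List V) (n : ℕ) : (wpow v n).length = n * v.length := by
  induction n with
  | zero => simp [wpow]
  | succ n ih => rw [wpow, List.length_append, ih, Nat.succ_mul, Nat.add_comm]

lemma append_wpow_comm (v : List V) (n : ℕ) : v ++ wpow v n = wpow v n ++ v := by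
  induction n with
  | zero => simp [wpow]
  | succ n ih => rw [wpow, List.append_assoc, ih]

lemma hasPeriod_of_append_comm {v w : List V} (h : v ++ w = w ++ v) : HasPeriod w v.length := by
  intro i hi
  rw [← List.getElem?_append_left (l₂ := v) hi, ← h, List.getElem?_append_right (by omega),
    Nat.add_sub_cancel]

lemma hasPeriod_wpow (v : List V) (n : ℕ) : HasPeriod (wpow v n) v.length :=
  hasPeriod_of_append_comm (append_wpow_comm v n)

lemma primitive_of_forall_not_hasPeriod {w : List V} (hw : w ≠ [])
    (h : ∀ q, 0 < q → 2 * q ≤ w.length → ¬ HasPeriod w q) : Primitive w := by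
  refine ⟨hw, fun v n hvn => ?_⟩
  subst hvn
  obtain _ | _ | n := n
  · exact absurd rfl hw
  · rfl
  · have hlen : 0 < (n + 2) * v.length := by rwa [← length_wpow, List.length_pos_iff]
    refine absurd (hasPeriod_wpow v _) (h _ (Nat.pos_of_mul_pos_left hlen) ?_)
    rw [length_wpow]
    exact Nat.mul_le_mul_right _ (by omega)

lemma not_primitive_wpow_two (v : List V) : ¬ Primitive (wpow v 2) :=
  fun h => absurd (h.2 v 2 rfl) (by decide)

lemma not_hasPeriod_replicate_append_replicate_append {a b : V} (hab : a ≠ b) (p : ℕ)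
    (u : List V) {q : ℕ} (hq : 0 < q) (hqp : q ≤ 2 * p + 1) :
    ¬ HasPeriod (List.replicate (p + 1) a ++ List.replicate (p + 1) b ++ u) q := by
  intro h
  obtain ⟨i, hip, hiq⟩ : ∃ i, i ≤ p ∧ p + 1 ≤ i + q ∧ i + q ≤ 2 * p + 1 := by
    rcases le_or_gt q (p + 1) with hq' | hq'
    · exact ⟨p + 1 - q, by omega⟩
    · exact ⟨0, by omega⟩
  have hper := h i (by simp; omega)
  rw [List.append_assoc, List.getElem?_append_left (by simp; omega),
    List.getElem?_append_right (by simp; omega), List.getElem?_append_left (by simp; omega),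
    List.getElem?_replicate_of_lt (by omega),
    List.getElem?_replicate_of_lt (by simp; omega)] at hper
  exact hab (Option.some_injective _ hper)

end Words

theorem stmt14_general {V : Type*} (a b : V) (hab : a ≠ b)
    (p : ℕ) :
    Primitive (wpow [a] (p+1) ++ wpow [b] (p+1) ++ wpow [a] (p+1) ++ wpow [b] p) ∧
    ¬ InsRobust (wpow [a] (p+1) ++ wpow [b] (p+1) ++ wpow [a] (p+1) ++ wpow [b] p) := by
  simp only [wpow_singleton]
  refine ⟨primitive_of_forall_not_hasPeriod (by simp) fun q hq hqlen => ?_, fun h => ?_⟩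
  · rw [List.append_assoc]
    refine not_hasPeriod_replicate_append_replicate_append hab p _ hq ?_
    simp only [List.length_append, List.length_replicate] at hqlen
    omega
  · have hsquare : List.replicate (p + 1) a ++ List.replicate (p + 1) b ++ List.replicate (p + 1) a
        ++ List.replicate p b ++ [b]
          = wpow (List.replicate (p + 1) a ++ List.replicate (p + 1) b) 2 := by
      simp [wpow, List.replicate_succ']
    exact not_primitive_wpow_two _ (hsquare ▸ h.2 _ [] b (List.append_nil _).symm)

theorem stmt14 {V : Type*} (a b : V) (hab : a ≠ b) (hbin : ∀ c : V, c = a ∨ c = b)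
    (p : ℕ) (hp : 1 ≤ p) :
    Primitive (wpow [a] (p+1) ++ wpow [b] (p+1) ++ wpow [a] (p+1) ++ wpow [b] p) ∧
    ¬ InsRobust (wpow [a] (p+1) ++ wpow [b] (p+1) ++ wpow [a] (p+1) ++ wpow [b] p) :=
  stmt14_general a b hab p
end

section
/- If w is a primitive word with a period p ≥ 2 such that p divides |w| + 1 and p ≤ |w|, then w is not ins-robust, and moreover every cyclic permutation of w is primitive and not ins-robust. -/
theorem wpow_length {V : Type*} (v : List V) (n : ℕ) :
    (wpow v n).length = n * v.length := by
  induction n with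
  | zero => simp [wpow]
  | succ n ih => simp [wpow, ih, Nat.succ_mul, Nat.add_comm]

theorem wpow_nil {V : Type*} (n : ℕ) : wpow ([] : List V) n = [] := by
  induction n with
  | zero => rfl
  | succ n ih => simp [wpow, ih]

theorem wpow_rot {V : Type*} (s t : List V) (n : ℕ) :
    wpow (s ++ t) n ++ s = s ++ wpow (t ++ s) n := by
  induction n with
  | zero => simp [wpow]
  | succ n ih => simp only [wpow, List.append_assoc, ih]

theorem rot_one {V : Type*} (a : V) (l v : List V) (n : ℕ)
    (h : a :: l = wpow v n) : ∃ v', l ++ [a] = wpow v' n := by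
  cases n with
  | zero => simp [wpow] at h
  | succ n =>
    cases v with
    | nil => rw [wpow_nil] at h; simp at h
    | cons b v' =>
      rw [wpow] at h
      obtain ⟨rfl, hl⟩ : a = b ∧ l = v' ++ wpow (b :: v') n := by
        simpa using h
      refine ⟨v' ++ [a], ?_⟩
      have hr : wpow (a :: v') n ++ [a] = [a] ++ wpow (v' ++ [a]) n := by
        simpa using wpow_rot [a] v' n
      rw [hl, List.append_assoc, hr, wpow]
      simp

theorem rot_pow_exists {V : Type*} (s : List V) (t v : List V) (n : ℕ)
    (h : s ++ t = wpow v n) : ∃ v', t ++ s = wpow v' n := by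
  induction s generalizing t v with
  | nil => exact ⟨v, by simpa using h⟩
  | cons a s ih =>
    obtain ⟨v1, h1⟩ := rot_one a (s ++ t) v n (by simpa using h)
    obtain ⟨v', h3⟩ := ih (t ++ [a]) v1 (by simpa [List.append_assoc] using h1)
    exact ⟨v', by simpa [List.append_assoc] using h3⟩

theorem wpow_getElem? {V : Type*} (v : List V) (n i : ℕ)
    (hi : i < n * v.length) : (wpow v n)[i]? = v[i % v.length]? := by
  induction n generalizing i with
  | zero => simp at hi
  | succ n ih =>
    rw [wpow]
    by_cases h : i < v.length
    · rw [List.getElem?_append, if_pos h, Nat.mod_eq_of_lt h]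
    · push_neg at h
      have hi' : i - v.length < n * v.length := by
        have h2 : (n+1) * v.length = n * v.length + v.length := by ring
        omega
      rw [List.getElem?_append, if_neg (by omega), ih _ hi', Nat.mod_eq_sub_mod h]

theorem primitive_rot {V : Type*} (x y : List V) (h : Primitive (x ++ y)) :
    Primitive (y ++ x) := by
  constructor
  · intro he
    rcases List.append_eq_nil_iff.mp he with ⟨rfl, rfl⟩
    exact h.1 rfl
  · intro v n hn
    obtain ⟨v', hv'⟩ := rot_pow_exists y x v n hn
    exact h.2 v' n hv'

theorem period_mod {V : Type*} (w : List V) (p : ℕ) (hp : 0 < p)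
    (hper : HasPeriod w p) : ∀ i, i < w.length → w[i]? = w[i % p]? := by
  intro i
  induction i using Nat.strong_induction_on with
  | _ i ih =>
    intro hi
    by_cases h : i < p
    · rw [Nat.mod_eq_of_lt h]
    · push_neg at h
      have h1 := hper (i - p) (by omega)
      rw [Nat.sub_add_cancel h] at h1
      rw [← h1, ih (i - p) (by omega) (by omega), Nat.mod_eq_sub_mod h]

theorem stmt19 {V : Type*} (w : List V) (p : ℕ) (hw : Primitive w)
    (hp : 2 ≤ p) (hdvd : p ∣ w.length + 1) (hple : p ≤ w.length)
    (hper : HasPeriod w p) :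
    ¬ InsRobust w ∧ ∀ x y : List V, w = x ++ y →
      Primitive (y ++ x) ∧ ¬ InsRobust (y ++ x) := by
  obtain ⟨k, hk⟩ := hdvd
  have hp0 : 0 < p := by omega
  have hk2 : 2 ≤ k := by nlinarith
  set u := w.take p with hu
  have hul : u.length = p := by simp [hu]; omega
  have hpl : p - 1 < w.length := by omega
  set a := w[p-1]'hpl with ha
  have hkp : k * p = p * k := Nat.mul_comm k p
  have hmod := period_mod w p hp0 hper
  have hkey : w ++ [a] = wpow u k := by
    apply List.ext_getElem?
    intro i
    by_cases h1 : i < w.length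
    · rw [List.getElem?_append, if_pos h1, wpow_getElem? u k i (by rw [hul]; omega),
        hmod i h1]
      have himp : i % p < p := Nat.mod_lt _ hp0
      rw [hul, hu, List.getElem?_take, if_pos himp]
    · by_cases h2 : i = w.length
      · subst h2
        have hl : (w ++ [a])[w.length]? = some a := by
          rw [List.getElem?_append_right (le_refl _)]
          simp
        rw [hl, wpow_getElem? u k _ (by rw [hul]; omega), hul]
        have hm : w.length % p = p - 1 := by
          have : w.length = (p - 1) + (k - 1) * p := by
            have h3 : (k-1)*p + p = k*p := by
              have : k - 1 + 1 = k := by omega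
              calc (k-1)*p + p = (k-1+1)*p := by ring
                _ = k*p := by rw [this]
            omega
          rw [this, Nat.add_mul_mod_self_right, Nat.mod_eq_of_lt (by omega)]
        rw [hm, hu, List.getElem?_take, if_pos (by omega),
          List.getElem?_eq_getElem hpl]
      · have h3 : w.length + 1 ≤ i := by omega
        rw [List.getElem?_eq_none (by simp; omega),
          List.getElem?_eq_none (by rw [wpow_length, hul]; omega)]
  have hcontra : ∀ z : List V, z ++ [a] = wpow u k → ¬ Primitive (z ++ [a]) := by
    intro z hz hprim
    have := hprim.2 u k hz
    omega
  constructor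
  · intro hins
    have h := hins.2 w [] a (by simp)
    exact hcontra w hkey (by simpa using h)
  · intro x y hxy
    have hprot : Primitive (y ++ x) := primitive_rot x y (hxy ▸ hw)
    refine ⟨hprot, ?_⟩
    intro hins
    have h := hins.2 y x a rfl
    have hx2 : x ++ (y ++ [a]) = wpow u k := by
      rw [← List.append_assoc, ← hxy, hkey]
    obtain ⟨v', hv'⟩ := rot_pow_exists x (y ++ [a]) u k hx2
    have : y ++ a :: x = wpow v' k := by
      rw [← hv']; simp
    have := h.2 v' k this
    omega
end
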